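/- arXiv:2211.00188 — 4 statements merged into one kernel-verified Lean document; each statement's English description precedes it below -/
import Mathlib

section
/- Let f_1,…,f_n : ℝ^d → ℝ be differentiable, f(x) := (1/n)∑_{i=1}^n f_i(x), and assume f is L₋-smooth and bounded below by f^inf ∈ ℝ, and assume L₊-average-smoothness with constant L₊ > 0. Let A^W, A^M ∈ (0,1] and B^W, B^M ≥ 0, and let γ satisfy 0 < γ ≤ 1/(L₋ + L₊·√(6B^M(B^W+1)/A^M + (2B^W/A^W)(1 + 3B^M(2−A^W)/A^M))). Let sequences (x^t), (g^t), (g̃^t), (g̃_i^t) in ℝ^d satisfy x^{t+1} = x^t − γ g^t and g̃^t = (1/n)∑_{i=1}^n g̃_i^t for all t. Define P^t := (1/n)∑_{i=1}^n ‖g̃_i^t − ∇f_i(x^t)‖² and R^t := ‖x^{t+1} − x^t‖², and assume the worker recursion P^{t+1} ≤ (1 − A^W)P^t + B^W L₊² R^t and the master recursion ‖g^{t+1} − g̃^{t+1}‖² ≤ (1 − A^M)‖g^t − g̃^t‖² + 3B^M(2 − A^W) P^t + 3B^M(B^W + 1)L₊² R^t hold for all t ≥ 0. Then for every T ≥ 1,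 (1/T)∑_{t=0}^{T−1} ‖∇f(x^t)‖² ≤ 2Ψ⁰/(γT), where Ψ⁰ := f(x⁰) − f^inf + (γ/A^M)‖g⁰ − g̃⁰‖² + (γ/A^W)(1 + 3B^M(2 − A^W)/A^M) P⁰. -/
open Finset

lemma jensen_aux {E : Type*} [NormedAddCommGroup E] [NormedSpace ℝ E] {n : ℕ} (hn : 1 ≤ n) (w : Fin n → E) :
    ‖(1/(n:ℝ)) • ∑ i, w i‖ ^ 2 ≤ (1/(n:ℝ)) * ∑ i, ‖w i‖ ^ 2 := by
  have hn0 : (0:ℝ) < n := by exact_mod_cast hn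
  have h1 : ‖∑ i, w i‖ ≤ ∑ i, ‖w i‖ := norm_sum_le _ _
  have h2 : (∑ i, ‖w i‖) ^ 2 ≤ (n:ℝ) * ∑ i, ‖w i‖ ^ 2 := by
    have := sq_sum_le_card_mul_sum_sq (s := (Finset.univ : Finset (Fin n))) (f := fun i => ‖w i‖)
    simpa using this
  have h4 : ‖∑ i, w i‖ ^ 2 ≤ (n:ℝ) * ∑ i, ‖w i‖ ^ 2 :=
    le_trans (pow_le_pow_left₀ (norm_nonneg _) h1 2) h2
  have h3 : ‖(1/(n:ℝ)) • ∑ i, w i‖ = (1/(n:ℝ)) * ‖∑ i, w i‖ := by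
    rw [norm_smul]; congr 1; rw [Real.norm_eq_abs, abs_of_pos (by positivity)]
  rw [h3, mul_pow]
  calc (1/(n:ℝ))^2 * ‖∑ i, w i‖^2 ≤ (1/(n:ℝ))^2 * ((n:ℝ) * ∑ i, ‖w i‖^2) := by
        apply mul_le_mul_of_nonneg_left h4 (by positivity)
    _ = (1/(n:ℝ)) * ∑ i, ‖w i‖^2 := by field_simp

lemma descent_aux {E : Type*} [NormedAddCommGroup E] [InnerProductSpace ℝ E] [CompleteSpace E]
    (f : E → ℝ) (hf : Differentiable ℝ f) (L : ℝ)
    (hL : ∀ x y, ‖gradient f x - gradient f y‖ ≤ L * ‖x - y‖) (x y : E) :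
    f y ≤ f x + (inner ℝ (gradient f x) (y - x) : ℝ) + L / 2 * ‖y - x‖ ^ 2 := by
  set v := y - x with hv
  have hcurve : ∀ t : ℝ, HasDerivAt (fun t : ℝ => x + t • v) v t := by
    intro t
    simpa using ((hasDerivAt_id t).smul_const v).const_add x
  have hcomp : ∀ t : ℝ, HasDerivAt (fun t : ℝ => f (x + t • v))
      (inner ℝ (gradient f (x + t • v)) v : ℝ) t := by
    intro t
    have h1 : HasFDerivAt f (InnerProductSpace.toDual ℝ E (gradient f (x + t • v))) (x + t • v) :=
      (hf _).hasGradientAt.hasFDerivAt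
    have := h1.comp_hasDerivAt t (hcurve t)
    rw [InnerProductSpace.toDual_apply_apply] at this; exact this
  set φ : ℝ → ℝ := fun t => f (x + t • v) - t * (inner ℝ (gradient f x) v : ℝ)
      - L / 2 * ‖v‖ ^ 2 * t ^ 2 with hφ
  have hφd : ∀ t : ℝ, HasDerivAt φ
      ((inner ℝ (gradient f (x + t • v)) v : ℝ) - (inner ℝ (gradient f x) v : ℝ)
        - L / 2 * ‖v‖ ^ 2 * (2 * t)) t := by
    intro t
    have h2 : HasDerivAt (fun t : ℝ => t * (inner ℝ (gradient f x) v : ℝ))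
        (inner ℝ (gradient f x) v : ℝ) t := by
      simpa using (hasDerivAt_id t).mul_const (inner ℝ (gradient f x) v : ℝ)
    have h3 : HasDerivAt (fun t : ℝ => L / 2 * ‖v‖ ^ 2 * t ^ 2)
        (L / 2 * ‖v‖ ^ 2 * (2 * t)) t := by
      have := (hasDerivAt_pow 2 t).const_mul (L / 2 * ‖v‖ ^ 2)
      simpa [mul_comm] using this
    exact ((hcomp t).sub h2).sub h3
  have hφdiff : Differentiable ℝ φ := fun t => (hφd t).differentiableAt
  have hanti : AntitoneOn φ (Set.Icc (0:ℝ) 1) := by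
    apply antitoneOn_of_deriv_nonpos (convex_Icc 0 1) hφdiff.continuous.continuousOn
      hφdiff.differentiableOn
    intro t ht
    rw [interior_Icc] at ht
    rw [(hφd t).deriv]
    have h4 : (inner ℝ (gradient f (x + t • v)) v : ℝ) - (inner ℝ (gradient f x) v : ℝ)
        = (inner ℝ (gradient f (x + t • v) - gradient f x) v : ℝ) := (inner_sub_left _ _ _).symm
    have hb : (inner ℝ (gradient f (x + t • v) - gradient f x) v : ℝ) ≤ L * (t * ‖v‖) * ‖v‖ := by
      calc (inner ℝ (gradient f (x + t • v) - gradient f x) v : ℝ)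
          ≤ ‖gradient f (x + t • v) - gradient f x‖ * ‖v‖ := real_inner_le_norm _ _
        _ ≤ (L * ‖x + t • v - x‖) * ‖v‖ :=
            mul_le_mul_of_nonneg_right (hL _ _) (norm_nonneg v)
        _ = L * (t * ‖v‖) * ‖v‖ := by
            rw [add_sub_cancel_left, norm_smul, Real.norm_eq_abs, abs_of_pos ht.1]
    rw [h4] at *
    linarith [hb]
  have h01 : φ 1 ≤ φ 0 :=
    hanti (Set.left_mem_Icc.mpr zero_le_one) (Set.right_mem_Icc.mpr zero_le_one) zero_le_one
  have hx0 : x + (0:ℝ) • v = x := by simp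
  have hx1 : x + (1:ℝ) • v = y := by simp [hv]
  simp only [hφ, hx0, hx1] at h01
  nlinarith [h01]

lemma grad_avg {E : Type*} [NormedAddCommGroup E] [InnerProductSpace ℝ E] [CompleteSpace E]
    {n : ℕ} (fi : Fin n → E → ℝ) (hdiff : ∀ i, Differentiable ℝ (fi i))
    (f : E → ℝ) (hf : ∀ x, f x = (1 / (n : ℝ)) * ∑ i, fi i x) (p : E) :
    gradient f p = (1/(n:ℝ)) • ∑ i, gradient (fi i) p := by
  have hF : HasFDerivAt (fun y => (1/(n:ℝ)) * ∑ i, fi i y)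
      ((1/(n:ℝ)) • ∑ i, InnerProductSpace.toDual ℝ E (gradient (fi i) p)) p :=
    (HasFDerivAt.fun_sum fun i _ => ((hdiff i) p).hasGradientAt.hasFDerivAt).const_mul _
  have hfeq : f = fun y => (1/(n:ℝ)) * ∑ i, fi i y := funext hf
  have hG : HasGradientAt f ((1/(n:ℝ)) • ∑ i, gradient (fi i) p) p := by
    rw [hasGradientAt_iff_hasFDerivAt, hfeq]
    convert hF using 1
    · rfl
    simp [map_sum]
  exact hG.gradient


set_option maxHeartbeats 1600000 in
/-- **Theorem (nonconvex convergence of bidirectional 3PC compressed GD).**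
With `f = (1/n)∑ fi i` being `Lm`-smooth and bounded below by `finf`,
`Lp`-average-smoothness (`Lp > 0`), worker/master 3PC constants
`AW, AM ∈ (0,1]`, `BW, BM ≥ 0`, stepsize
`0 < γ ≤ 1/(Lm + Lp√(6BM(BW+1)/AM + (2BW/AW)(1 + 3BM(2-AW)/AM)))`,
iterates `x (t+1) = x t - γ g t`, aggregates `g̃ t = (1/n)∑ g̃ t i`, and the
worker and master contraction recursions, one has
`(1/T)∑_{t<T} ‖∇f(x^t)‖² ≤ 2Ψ⁰/(γT)` for all `T ≥ 1`. -/
theorem bidirectional_nonconvex_rate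
    {d n : ℕ} (hn : 1 ≤ n)
    (fi : Fin n → EuclideanSpace ℝ (Fin d) → ℝ)
    (hdiff : ∀ i, Differentiable ℝ (fi i))
    (f : EuclideanSpace ℝ (Fin d) → ℝ)
    (hf : ∀ x, f x = (1 / (n : ℝ)) * ∑ i, fi i x)
    (Lm Lp : ℝ) (hLppos : 0 < Lp)
    (hLm : ∀ x y, ‖gradient f x - gradient f y‖ ≤ Lm * ‖x - y‖)
    (finf : ℝ) (hfinf : ∀ x, finf ≤ f x)
    (hLp : ∀ x y, (1 / (n : ℝ)) * ∑ i, ‖gradient (fi i) x - gradient (fi i) y‖ ^ 2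
      ≤ Lp ^ 2 * ‖x - y‖ ^ 2)
    (AW AM BW BM : ℝ)
    (hAW : AW ∈ Set.Ioc (0 : ℝ) 1) (hAM : AM ∈ Set.Ioc (0 : ℝ) 1)
    (hBW : 0 ≤ BW) (hBM : 0 ≤ BM)
    (γ : ℝ) (hγ0 : 0 < γ)
    (hγ : γ ≤ 1 / (Lm + Lp * Real.sqrt (6 * BM * (BW + 1) / AM
      + (2 * BW / AW) * (1 + 3 * BM * (2 - AW) / AM))))
    (x g gt : ℕ → EuclideanSpace ℝ (Fin d))
    (gti : ℕ → Fin n → EuclideanSpace ℝ (Fin d))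
    (hx : ∀ t, x (t + 1) = x t - γ • g t)
    (hgt : ∀ t, gt t = (1 / (n : ℝ)) • ∑ i, gti t i)
    (P R : ℕ → ℝ)
    (hP : ∀ t, P t = (1 / (n : ℝ)) * ∑ i, ‖gti t i - gradient (fi i) (x t)‖ ^ 2)
    (hR : ∀ t, R t = ‖x (t + 1) - x t‖ ^ 2)
    (hPrec : ∀ t, P (t + 1) ≤ (1 - AW) * P t + BW * Lp ^ 2 * R t)
    (hMrec : ∀ t, ‖g (t + 1) - gt (t + 1)‖ ^ 2 ≤
      (1 - AM) * ‖g t - gt t‖ ^ 2 + 3 * BM * (2 - AW) * P t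
        + 3 * BM * (BW + 1) * Lp ^ 2 * R t) :
    ∀ T : ℕ, 1 ≤ T →
      (1 / (T : ℝ)) * ∑ t ∈ Finset.range T, ‖gradient f (x t)‖ ^ 2 ≤
        2 * (f (x 0) - finf + (γ / AM) * ‖g 0 - gt 0‖ ^ 2
          + (γ / AW) * (1 + 3 * BM * (2 - AW) / AM) * P 0) / (γ * T) := by
  intro T hT
  have hn0 : (0:ℝ) < n := by exact_mod_cast hn
  have hAM0 : (0:ℝ) < AM := hAM.1
  have hAW0 : (0:ℝ) < AW := hAW.1
  have h2AW : (0:ℝ) ≤ 2 - AW := by linarith [hAW.2]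
  set c1 : ℝ := 1 + 3 * BM * (2 - AW) / AM with hc1def
  have hc1nn : 0 ≤ c1 := by
    have h0 : 0 ≤ 3*BM*(2-AW)/AM := div_nonneg (mul_nonneg (by positivity) h2AW) hAM0.le
    rw [hc1def]; linarith
  set S : ℝ := 6 * BM * (BW + 1) / AM + 2 * BW / AW * c1 with hSdef
  set Ψ : ℕ → ℝ := fun t => f (x t) - finf + (γ/AM)*‖g t - gt t‖^2 + (γ/AW)*c1*(P t)
    with hΨdef
  clear_value Ψ
  have hΨ0 : Ψ 0 = f (x 0) - finf + (γ/AM)*‖g 0 - gt 0‖^2 + (γ/AW)*c1*(P 0) := by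
    simp only [hΨdef]
  have hPnn : ∀ t, 0 ≤ P t := fun t => by rw [hP t]; positivity
  have hΨnn : ∀ t, 0 ≤ Ψ t := by
    intro t
    have h1 : finf ≤ f (x t) := hfinf (x t)
    have h2 : 0 ≤ (γ/AM)*‖g t - gt t‖^2 := by positivity
    have h3 : 0 ≤ (γ/AW)*c1*(P t) :=
      mul_nonneg (mul_nonneg (by positivity) hc1nn) (hPnn t)
    simp only [hΨdef]; linarith
  have hTpos : (0:ℝ) < T := by exact_mod_cast hT
  rcases Nat.eq_zero_or_pos d with hd | hd
  · subst hd
    have hzero : ∀ v : EuclideanSpace ℝ (Fin 0), ‖v‖ = 0 := fun v => by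
      simp [EuclideanSpace.norm_eq]
    have hsum0 : ∑ t ∈ Finset.range T, ‖gradient f (x t)‖^2 = 0 :=
      Finset.sum_eq_zero fun t _ => by rw [hzero]; ring
    rw [hsum0, mul_zero]
    apply div_nonneg _ (by positivity)
    have h := hΨnn 0
    rw [hΨ0] at h
    linarith
  -- main case : d ≥ 1
  have hLm0 : (0:ℝ) ≤ Lm := by
    have h := hLm 0 (EuclideanSpace.single (⟨0, hd⟩ : Fin d) (1:ℝ))
    have hnrm : ‖(0:EuclideanSpace ℝ (Fin d)) - EuclideanSpace.single (⟨0, hd⟩ : Fin d) (1:ℝ)‖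
        = 1 := by rw [zero_sub, norm_neg, EuclideanSpace.norm_single]; norm_num
    rw [hnrm, mul_one] at h
    exact le_trans (norm_nonneg _) h
  have hSnn : 0 ≤ S := by
    have h1 : 0 ≤ 6*BM*(BW+1)/AM := by positivity
    have h2 : 0 ≤ 2*BW/AW*c1 := mul_nonneg (by positivity) hc1nn
    rw [hSdef]; linarith
  have hs2 : Real.sqrt S ^ 2 = S := Real.sq_sqrt hSnn
  have hsnn : 0 ≤ Real.sqrt S := Real.sqrt_nonneg S
  have hK : 0 < Lm + Lp * Real.sqrt S := by
    rcases lt_or_ge 0 (Lm + Lp * Real.sqrt S) with h | h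
    · exact h
    · exfalso
      have : 1/(Lm + Lp * Real.sqrt S) ≤ 0 := one_div_nonpos.mpr h
      linarith
  have hγK : γ * (Lm + Lp * Real.sqrt S) ≤ 1 := by
    rw [le_div_iff₀ hK] at hγ; exact hγ
  have ht1 : γ * Lp * Real.sqrt S ≤ 1 := by nlinarith [mul_nonneg hγ0.le hLm0]
  have hstep : γ * Lm + γ^2 * Lp^2 * S ≤ 1 := by
    have h5 : (γ * Lp * Real.sqrt S)^2 = γ^2 * Lp^2 * S := by
      rw [mul_pow, mul_pow, hs2]
    have hu : 0 ≤ γ * Lp * Real.sqrt S := by positivity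
    nlinarith [mul_nonneg hu (sub_nonneg.mpr ht1)]
  have hgradf : ∀ p, gradient f p = (1/(n:ℝ)) • ∑ i, gradient (fi i) p :=
    grad_avg fi hdiff f hf
  have hfd : Differentiable ℝ f := by
    have hfeq : f = fun y => (1/(n:ℝ)) * ∑ i, fi i y := funext hf
    rw [hfeq]
    exact Differentiable.const_mul (Differentiable.fun_sum fun i _ => hdiff i) _
  have step : ∀ t, Ψ (t+1) + γ/2 * ‖gradient f (x t)‖^2 ≤ Ψ t := by
    intro t
    have hRt : R t = γ^2 * ‖g t‖^2 := by
      rw [hR t, hx t]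
      have he : x t - γ • g t - x t = (-γ) • g t := by rw [neg_smul]; abel
      rw [he, norm_smul, mul_pow, Real.norm_eq_abs, sq_abs, neg_sq]
    have hdesc : f (x (t+1)) ≤ f (x t)
        + -γ * ((‖gradient f (x t)‖^2 + ‖g t‖^2 - ‖gradient f (x t) - g t‖^2)/2)
        + Lm/2 * (γ^2 * ‖g t‖^2) := by
      have h0 := descent_aux f hfd Lm hLm (x t) (x (t+1))
      have hy : x (t+1) - x t = (-γ) • g t := by rw [hx t, neg_smul]; abel
      rw [hy, real_inner_smul_right] at h0
      have hnrm : ‖(-γ) • g t‖^2 = γ^2 * ‖g t‖^2 := by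
        rw [norm_smul, mul_pow, Real.norm_eq_abs, sq_abs, neg_sq]
      rw [hnrm] at h0
      have hip : (inner ℝ (gradient f (x t)) (g t) : ℝ)
          = (‖gradient f (x t)‖^2 + ‖g t‖^2 - ‖gradient f (x t) - g t‖^2)/2 := by
        have := norm_sub_sq_real (gradient f (x t)) (g t)
        linarith
      rw [hip] at h0
      linarith
    have hQ : ‖gradient f (x t) - g t‖^2 ≤ 2*‖g t - gt t‖^2 + 2*P t := by
      have hsplit : gradient f (x t) - g t
          = (gradient f (x t) - gt t) + (gt t - g t) := by abel
      have ha : ‖gradient f (x t) - gt t‖^2 ≤ P t := by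
        have heq : gradient f (x t) - gt t
            = (1/(n:ℝ)) • ∑ i, (gradient (fi i) (x t) - gti t i) := by
          rw [hgradf, hgt, ← smul_sub, ← Finset.sum_sub_distrib]
        rw [heq, hP t]
        refine le_trans (jensen_aux hn _) (le_of_eq ?_)
        congr 1
        exact Finset.sum_congr rfl fun i _ => by rw [norm_sub_rev]
      have hb : ‖gt t - g t‖ = ‖g t - gt t‖ := norm_sub_rev _ _
      calc ‖gradient f (x t) - g t‖^2
          = ‖(gradient f (x t) - gt t) + (gt t - g t)‖^2 := by rw [hsplit]
        _ ≤ (‖gradient f (x t) - gt t‖ + ‖gt t - g t‖)^2 :=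
            pow_le_pow_left₀ (norm_nonneg _) (norm_add_le _ _) 2
        _ ≤ 2*‖gradient f (x t) - gt t‖^2 + 2*‖gt t - g t‖^2 := by
            nlinarith [sq_nonneg (‖gradient f (x t) - gt t‖ - ‖gt t - g t‖)]
        _ ≤ 2*‖g t - gt t‖^2 + 2*P t := by rw [hb]; linarith
    have h2 : γ/2 * ‖gradient f (x t) - g t‖^2
        ≤ γ/2 * (2*‖g t - gt t‖^2 + 2*P t) :=
      mul_le_mul_of_nonneg_left hQ (by positivity)
    have h3 : (γ/AM) * ‖g (t+1) - gt (t+1)‖^2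
        ≤ (γ/AM)*‖g t - gt t‖^2 - γ*‖g t - gt t‖^2
          + (3*BM*(2-AW)*γ/AM)*P t + (3*BM*(BW+1)*Lp^2*γ^3/AM)*‖g t‖^2 := by
      have h0 := mul_le_mul_of_nonneg_left (hMrec t) (le_of_lt (div_pos hγ0 hAM0))
      rw [hRt] at h0
      refine le_trans h0 (le_of_eq ?_)
      field_simp
    have h4 : (γ/AW)*c1*(P (t+1))
        ≤ (γ/AW)*c1*(P t) - γ*c1*(P t) + (c1*BW*Lp^2*γ^3/AW)*‖g t‖^2 := by
      have h0 := mul_le_mul_of_nonneg_left (hPrec t)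
        (mul_nonneg (le_of_lt (div_pos hγ0 hAW0)) hc1nn)
      rw [hRt] at h0
      refine le_trans h0 (le_of_eq ?_)
      field_simp
    have h5 : Lm/2*(γ^2*‖g t‖^2) + (3*BM*(BW+1)*Lp^2*γ^3/AM)*‖g t‖^2
        + (c1*BW*Lp^2*γ^3/AW)*‖g t‖^2 ≤ γ/2*‖g t‖^2 := by
      have h0 := mul_le_mul_of_nonneg_right hstep
        (show (0:ℝ) ≤ γ/2*‖g t‖^2 by positivity)
      have he : (γ*Lm + γ^2*Lp^2*S)*(γ/2*‖g t‖^2)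
          = Lm/2*(γ^2*‖g t‖^2) + (3*BM*(BW+1)*Lp^2*γ^3/AM)*‖g t‖^2
            + (c1*BW*Lp^2*γ^3/AW)*‖g t‖^2 := by
        rw [hSdef]; field_simp; ring
      rw [he, one_mul] at h0
      exact h0
    have h6 : γ*c1*(P t) = γ*(P t) + (3*BM*(2-AW)*γ/AM)*(P t) := by
      rw [hc1def]; field_simp
    simp only [hΨdef]
    linarith [hdesc, h2, h3, h4, h5, h6.le, h6.ge]
  have tele : ∀ T', Ψ T' + γ/2 * ∑ t ∈ Finset.range T', ‖gradient f (x t)‖^2 ≤ Ψ 0 := by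
    intro T'
    induction T' with
    | zero => simp
    | succ k ih =>
      rw [Finset.sum_range_succ]
      have := step k
      linarith
  have hfin := tele T
  have hΨT := hΨnn T
  have hγT : 0 < γ * (T:ℝ) := by positivity
  rw [le_div_iff₀ hγT]
  have hmul : (1/(T:ℝ)) * (∑ t ∈ Finset.range T, ‖gradient f (x t)‖^2) * (γ * T)
      = γ * ∑ t ∈ Finset.range T, ‖gradient f (x t)‖^2 := by
    field_simp
  rw [hmul]
  rw [hΨ0] at hfin
  linarith [hfin, hΨT]
end

section
/- Under the hypotheses of the bidirectional nonconvex convergence theorem (f L₋-smooth and bounded below by f^inf, L₊-average-smoothness, x^{t+1} = x^t − γg^t, g̃^t = (1/n)∑ g̃_i^t, worker recursion P^{t+1} ≤ (1 − A^W)P^t + B^W L₊² R^t and master recursion ‖g^{t+1} − g̃^{t+1}‖² ≤ (1 − A^M)‖g^t − g̃^t‖² + 3B^M(2 − A^W)P^t + 3B^M(B^W+1)L₊² R^t for all t), take the stepsize γ = 1/(L₋ + L₊·√(6B^M(B^W+1)/A^M + (2B^W/A^W)(1 + 3B^M(2−A^W)/A^M))). Then for every T ≥ 1, (1/T)∑_{t=0}^{T−1}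 ‖∇f(x^t)‖² ≤ 2Ψ⁰·(L₋ + L₊·√(6B^M(B^W+1)/A^M + (2B^W/A^W)(1 + 3B^M(2−A^W)/A^M)))/T, where Ψ⁰ := f(x⁰) − f^inf + (γ/A^M)‖g⁰ − g̃⁰‖² + (γ/A^W)(1 + 3B^M(2 − A^W)/A^M) P⁰. -/
local notation "⟪" x ", " y "⟫_ℝ" => @inner ℝ _ _ x y

lemma descent_lemma {F : Type*} [NormedAddCommGroup F] [InnerProductSpace ℝ F] [CompleteSpace F]
    {f : F → ℝ} (hf : Differentiable ℝ f) {L : ℝ}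
    (hlip : ∀ x y, ‖gradient f x - gradient f y‖ ≤ L * ‖x - y‖) (x v : F) :
    f (x + v) ≤ f x + ⟪gradient f x, v⟫_ℝ + L / 2 * ‖v‖ ^ 2 := by
  set φ : ℝ → ℝ := fun t => f (x + t • v) - t * ⟪gradient f x, v⟫_ℝ - L / 2 * t ^ 2 * ‖v‖ ^ 2
    with hφ
  have hline : ∀ t : ℝ, HasDerivAt (fun s : ℝ => x + s • v) v t := fun t => by
    simpa using ((hasDerivAt_id t).smul_const v).const_add x
  have hd : ∀ t : ℝ, HasDerivAt φ
      (⟪gradient f (x + t • v), v⟫_ℝ - ⟪gradient f x, v⟫_ℝ - L * t * ‖v‖ ^ 2) t := by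
    intro t
    have h1 : HasDerivAt (fun s : ℝ => f (x + s • v)) ⟪gradient f (x + t • v), v⟫_ℝ t := by
      have := ((hf (x + t • v)).hasGradientAt.hasFDerivAt).comp_hasDerivAt t (hline t)
      simpa [InnerProductSpace.toDual_apply_apply, Function.comp_def] using this
    have h2 : HasDerivAt (fun s : ℝ => s * ⟪gradient f x, v⟫_ℝ) ⟪gradient f x, v⟫_ℝ t := by
      simpa using (hasDerivAt_id t).mul_const ⟪gradient f x, v⟫_ℝ
    have h3 : HasDerivAt (fun s : ℝ => L / 2 * s ^ 2 * ‖v‖ ^ 2) (L * t * ‖v‖ ^ 2) t := by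
      have := ((hasDerivAt_pow 2 t).const_mul (L / 2)).mul_const (‖v‖ ^ 2)
      convert this using 1
      · rfl
      · rfl
      ring
    simpa [hφ] using (h1.fun_sub h2).fun_sub h3
  have hmono : AntitoneOn φ (Set.Icc (0 : ℝ) 1) := by
    apply antitoneOn_of_deriv_nonpos (convex_Icc 0 1)
    · exact fun t _ => ((hd t).continuousAt).continuousWithinAt
    · exact fun t _ => ((hd t).differentiableAt).differentiableWithinAt
    · intro t ht
      rw [interior_Icc] at ht
      rw [(hd t).deriv]
      have h4 : ⟪gradient f (x + t • v) - gradient f x, v⟫_ℝ ≤ L * t * ‖v‖ ^ 2 := by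
        calc ⟪gradient f (x + t • v) - gradient f x, v⟫_ℝ
            ≤ ‖gradient f (x + t • v) - gradient f x‖ * ‖v‖ := real_inner_le_norm _ _
          _ ≤ (L * ‖(x + t • v) - x‖) * ‖v‖ :=
              mul_le_mul_of_nonneg_right (hlip _ _) (norm_nonneg _)
          _ = L * t * ‖v‖ ^ 2 := by
              rw [add_sub_cancel_left, norm_smul, Real.norm_eq_abs,
                abs_of_nonneg (le_of_lt ht.1)]
              ring
      rw [inner_sub_left] at h4
      linarith
  have := hmono (Set.mem_Icc.mpr ⟨le_refl 0, zero_le_one⟩)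
    (Set.mem_Icc.mpr ⟨zero_le_one, le_refl 1⟩) zero_le_one
  simp only [hφ, one_smul, zero_smul, add_zero, one_pow, zero_pow, one_mul, zero_mul,
    mul_zero, sub_zero] at this
  linarith

lemma gradient_avg {F : Type*} [NormedAddCommGroup F] [InnerProductSpace ℝ F] [CompleteSpace F]
    {n : ℕ} (fi : Fin n → F → ℝ) (hdiff : ∀ i, Differentiable ℝ (fi i))
    (f : F → ℝ) (hf : ∀ y, f y = (1 / (n : ℝ)) * ∑ i, fi i y) (x : F) :
    gradient f x = (1 / (n : ℝ)) • ∑ i, gradient (fi i) x := by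
  have hfd : HasFDerivAt f ((1 / (n : ℝ)) • ∑ i, fderiv ℝ (fi i) x) x := by
    have h1 : HasFDerivAt (fun y => ∑ i, fi i y) (∑ i, fderiv ℝ (fi i) x) x :=
      HasFDerivAt.fun_sum (fun i _ => (hdiff i x).hasFDerivAt)
    have h2 := h1.const_mul (1 / (n : ℝ))
    exact h2.congr_of_eventuallyEq (Filter.Eventually.of_forall fun y => (hf y))
  have hg : HasGradientAt f ((1 / (n : ℝ)) • ∑ i, gradient (fi i) x) x := by
    rw [hasGradientAt_iff_hasFDerivAt]
    convert hfd using 1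
    · rfl
    rw [map_smul, map_sum]
    congr 1
    exact Finset.sum_congr rfl fun i _ => by
      simp [gradient]
  exact hg.gradient

lemma avg_norm_sq {F : Type*} [NormedAddCommGroup F] [NormedSpace ℝ F]
    {n : ℕ} (hn : 1 ≤ n) (v : Fin n → F) :
    ‖(1 / (n : ℝ)) • ∑ i, v i‖ ^ 2 ≤ (1 / (n : ℝ)) * ∑ i, ‖v i‖ ^ 2 := by
  have hn0 : (0 : ℝ) < n := by exact_mod_cast hn
  have h1 : ‖∑ i, v i‖ ≤ ∑ i, ‖v i‖ := norm_sum_le _ _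
  have h2 : (∑ i, ‖v i‖) ^ 2 ≤ (n : ℝ) * ∑ i, ‖v i‖ ^ 2 := by
    have := sq_sum_le_card_mul_sum_sq (s := Finset.univ) (f := fun i : Fin n => ‖v i‖)
    simpa using this
  have h3 : ‖(1 / (n : ℝ)) • ∑ i, v i‖ ^ 2 = (1 / (n : ℝ)) ^ 2 * ‖∑ i, v i‖ ^ 2 := by
    rw [norm_smul, Real.norm_eq_abs, abs_of_pos (by positivity), mul_pow]
  rw [h3]
  have h4 : ‖∑ i, v i‖ ^ 2 ≤ (n : ℝ) * ∑ i, ‖v i‖ ^ 2 :=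
    le_trans (by nlinarith [norm_nonneg (∑ i, v i)]) h2
  have h5 : (1 / (n : ℝ)) ^ 2 * ‖∑ i, v i‖ ^ 2 ≤ (1 / (n : ℝ)) ^ 2 * ((n : ℝ) * ∑ i, ‖v i‖ ^ 2) :=
    mul_le_mul_of_nonneg_left h4 (by positivity)
  calc (1 / (n : ℝ)) ^ 2 * ‖∑ i, v i‖ ^ 2 ≤ (1 / (n : ℝ)) ^ 2 * ((n : ℝ) * ∑ i, ‖v i‖ ^ 2) := h5
    _ = (1 / (n : ℝ)) * ∑ i, ‖v i‖ ^ 2 := by field_simp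

set_option maxHeartbeats 2000000 in
/-- **Corollary (bidirectional nonconvex rate with the theoretical stepsize).**
Under the hypotheses of the bidirectional nonconvex convergence theorem, with
`γ = 1/(Lm + Lp√(6BM(BW+1)/AM + (2BW/AW)(1 + 3BM(2-AW)/AM)))`, one has
`(1/T)∑_{t<T} ‖∇f(x^t)‖² ≤ 2Ψ⁰(Lm + Lp√(⋯))/T` for all `T ≥ 1`. -/
theorem bidirectional_nonconvex_rate_corollary
    {d n : ℕ} (hn : 1 ≤ n)
    (fi : Fin n → EuclideanSpace ℝ (Fin d) → ℝ)
    (hdiff : ∀ i, Differentiable ℝ (fi i))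
    (f : EuclideanSpace ℝ (Fin d) → ℝ)
    (hf : ∀ x, f x = (1 / (n : ℝ)) * ∑ i, fi i x)
    (Lm Lp : ℝ) (hLppos : 0 < Lp)
    (hLm : ∀ x y, ‖gradient f x - gradient f y‖ ≤ Lm * ‖x - y‖)
    (finf : ℝ) (hfinf : ∀ x, finf ≤ f x)
    (hLp : ∀ x y, (1 / (n : ℝ)) * ∑ i, ‖gradient (fi i) x - gradient (fi i) y‖ ^ 2
      ≤ Lp ^ 2 * ‖x - y‖ ^ 2)
    (AW AM BW BM : ℝ)
    (hAW : AW ∈ Set.Ioc (0 : ℝ) 1) (hAM : AM ∈ Set.Ioc (0 : ℝ) 1)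
    (hBW : 0 ≤ BW) (hBM : 0 ≤ BM)
    (γ : ℝ) (hγ0 : 0 < γ)
    (hγ : γ = 1 / (Lm + Lp * Real.sqrt (6 * BM * (BW + 1) / AM
      + (2 * BW / AW) * (1 + 3 * BM * (2 - AW) / AM))))
    (x g gt : ℕ → EuclideanSpace ℝ (Fin d))
    (gti : ℕ → Fin n → EuclideanSpace ℝ (Fin d))
    (hx : ∀ t, x (t + 1) = x t - γ • g t)
    (hgt : ∀ t, gt t = (1 / (n : ℝ)) • ∑ i, gti t i)
    (P R : ℕ → ℝ)
    (hP : ∀ t, P t = (1 / (n : ℝ)) * ∑ i, ‖gti t i - gradient (fi i) (x t)‖ ^ 2)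
    (hR : ∀ t, R t = ‖x (t + 1) - x t‖ ^ 2)
    (hPrec : ∀ t, P (t + 1) ≤ (1 - AW) * P t + BW * Lp ^ 2 * R t)
    (hMrec : ∀ t, ‖g (t + 1) - gt (t + 1)‖ ^ 2 ≤
      (1 - AM) * ‖g t - gt t‖ ^ 2 + 3 * BM * (2 - AW) * P t
        + 3 * BM * (BW + 1) * Lp ^ 2 * R t) :
    ∀ T : ℕ, 1 ≤ T →
      (1 / (T : ℝ)) * ∑ t ∈ Finset.range T, ‖gradient f (x t)‖ ^ 2 ≤
        2 * (f (x 0) - finf + (γ / AM) * ‖g 0 - gt 0‖ ^ 2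
            + (γ / AW) * (1 + 3 * BM * (2 - AW) / AM) * P 0)
          * (Lm + Lp * Real.sqrt (6 * BM * (BW + 1) / AM
            + (2 * BW / AW) * (1 + 3 * BM * (2 - AW) / AM))) / T := by
  intro T hT
  obtain ⟨hAW0, hAW1⟩ := hAW
  obtain ⟨hAM0, hAM1⟩ := hAM
  set S := 6 * BM * (BW + 1) / AM + (2 * BW / AW) * (1 + 3 * BM * (2 - AW) / AM) with hSdef
  have hSnn : 0 ≤ S := by
    have h1 : (0:ℝ) ≤ 6 * BM * (BW + 1) / AM := by positivity
    have h2 : (0:ℝ) ≤ 1 + 3 * BM * (2 - AW) / AM := by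
      have : (0:ℝ) ≤ 3 * BM * (2 - AW) / AM := by
        apply div_nonneg _ hAM0.le
        have : (0:ℝ) ≤ 2 - AW := by linarith
        positivity
      linarith
    have h3 : (0:ℝ) ≤ (2 * BW / AW) * (1 + 3 * BM * (2 - AW) / AM) := by positivity
    simp only [hSdef]; linarith
  have hE : 0 < Lm + Lp * Real.sqrt S := by
    rw [hγ] at hγ0
    exact one_div_pos.mp hγ0
  have hγE : γ * (Lm + Lp * Real.sqrt S) = 1 := by
    rw [hγ]
    field_simp
  set C := γ / AM with hCdef
  set D := γ / AW * (1 + 3 * BM * (2 - AW) / AM) with hDdef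
  have hCnn : 0 ≤ C := by positivity
  have hDnn : 0 ≤ D := by
    have h2 : (0:ℝ) ≤ 1 + 3 * BM * (2 - AW) / AM := by
      have : (0:ℝ) ≤ 3 * BM * (2 - AW) / AM := by
        apply div_nonneg _ hAM0.le
        have : (0:ℝ) ≤ 2 - AW := by linarith
        positivity
      linarith
    positivity
  have hPnn : ∀ t, 0 ≤ P t := by
    intro t; rw [hP t]; positivity
  set Ψ : ℕ → ℝ := fun t => f (x t) - finf + C * ‖g t - gt t‖ ^ 2 + D * P t with hΨdef
  have hΨnn : ∀ t, 0 ≤ Ψ t := by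
    intro t
    have h1 := hfinf (x t)
    have h2 : 0 ≤ C * ‖g t - gt t‖ ^ 2 := by positivity
    have h3 : 0 ≤ D * P t := mul_nonneg hDnn (hPnn t)
    simp only [hΨdef]; linarith
  have hT0 : (0:ℝ) < T := by exact_mod_cast hT
  -- degenerate dimension case
  rcases Nat.eq_zero_or_pos d with hd | hd
  · have hnz : ∀ y : EuclideanSpace ℝ (Fin d), ‖y‖ = 0 := by
      subst hd
      intro y
      rw [EuclideanSpace.norm_eq]
      simp
    have hlhs : (1 / (T : ℝ)) * ∑ t ∈ Finset.range T, ‖gradient f (x t)‖ ^ 2 = 0 := by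
      rw [Finset.sum_congr rfl fun t _ => by rw [hnz (gradient f (x t))]]
      simp
    rw [hlhs]
    have hrhs : 0 ≤ Ψ 0 := hΨnn 0
    simp only [hΨdef] at hrhs
    apply div_nonneg _ hT0.le
    apply mul_nonneg _ hE.le
    linarith
  -- main case: Lm ≥ 0
  have hLm0 : 0 ≤ Lm := by
    have h := hLm 0 (EuclideanSpace.single ⟨0, hd⟩ (1:ℝ))
    have hnorm : ‖(0 : EuclideanSpace ℝ (Fin d)) - EuclideanSpace.single ⟨0, hd⟩ (1:ℝ)‖ = 1 := by
      rw [zero_sub, norm_neg, EuclideanSpace.norm_single, norm_one]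
    rw [hnorm, mul_one] at h
    exact le_trans (norm_nonneg _) h
  have key : Lm * γ + γ ^ 2 * Lp ^ 2 * S ≤ 1 := by
    have hsq : Real.sqrt S ^ 2 = S := Real.sq_sqrt hSnn
    have hb : 0 ≤ γ * (Lp * Real.sqrt S) := by positivity
    have hexp : γ * Lm + γ * (Lp * Real.sqrt S) = 1 := by linear_combination hγE
    have hb1 : γ * (Lp * Real.sqrt S) ≤ 1 := by nlinarith [mul_nonneg hγ0.le hLm0]
    have hbsq : γ ^ 2 * Lp ^ 2 * S = (γ * (Lp * Real.sqrt S)) ^ 2 := by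
      linear_combination (-(γ ^ 2 * Lp ^ 2)) * hsq
    have hbb : (γ * (Lp * Real.sqrt S)) ^ 2 ≤ γ * (Lp * Real.sqrt S) := by nlinarith
    rw [hbsq]
    linarith
  -- gradient and differentiability facts
  have hfeq : f = fun y => (1 / (n : ℝ)) * ∑ i, fi i y := funext hf
  have hfdiff : Differentiable ℝ f := by
    rw [hfeq]
    exact (Differentiable.fun_sum fun i _ => hdiff i).const_mul _
  have hgradavg : ∀ y, gradient f y = (1 / (n : ℝ)) • ∑ i, gradient (fi i) y :=
    fun y => gradient_avg fi hdiff f hf y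
  -- one-step decrease
  have hstep : ∀ t, Ψ (t + 1) + γ / 2 * ‖gradient f (x t)‖ ^ 2 ≤ Ψ t := by
    intro t
    have hxdiff : x (t + 1) - x t = -(γ • g t) := by rw [hx t]; abel
    have hRt : R t = γ ^ 2 * ‖g t‖ ^ 2 := by
      rw [hR t, hxdiff, norm_neg, norm_smul, Real.norm_eq_abs, abs_of_pos hγ0, mul_pow]
    have hdesc : f (x (t + 1)) ≤ f (x t) + ⟪gradient f (x t), x (t + 1) - x t⟫_ℝ
        + Lm / 2 * ‖x (t + 1) - x t‖ ^ 2 := by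
      have := descent_lemma hfdiff hLm (x t) (x (t + 1) - x t)
      have hadd : x t + (x (t + 1) - x t) = x (t + 1) := by abel
      rwa [hadd] at this
    have hinner : ⟪gradient f (x t), x (t + 1) - x t⟫_ℝ
        = -(γ / 2) * ‖gradient f (x t)‖ ^ 2 - γ / 2 * ‖g t‖ ^ 2
          + γ / 2 * ‖gradient f (x t) - g t‖ ^ 2 := by
      rw [hxdiff, inner_neg_right, real_inner_smul_right]
      have h := norm_sub_sq_real (gradient f (x t)) (g t)
      have h2 : ⟪gradient f (x t), g t⟫_ℝ
          = (‖gradient f (x t)‖ ^ 2 + ‖g t‖ ^ 2 - ‖gradient f (x t) - g t‖ ^ 2) / 2 := by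
        linarith
      rw [h2]; ring
    have hgt_grad : ‖gradient f (x t) - gt t‖ ^ 2 ≤ P t := by
      rw [hgradavg (x t), hgt t, hP t, ← smul_sub, ← Finset.sum_sub_distrib]
      have h := avg_norm_sq hn (fun i => gradient (fi i) (x t) - gti t i)
      calc ‖(1 / (n : ℝ)) • ∑ i, (gradient (fi i) (x t) - gti t i)‖ ^ 2
          ≤ (1 / (n : ℝ)) * ∑ i, ‖gradient (fi i) (x t) - gti t i‖ ^ 2 := h
        _ = (1 / (n : ℝ)) * ∑ i, ‖gti t i - gradient (fi i) (x t)‖ ^ 2 := by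
            congr 1
            exact Finset.sum_congr rfl fun i _ => by rw [norm_sub_rev]
    have hsplit : ‖gradient f (x t) - g t‖ ^ 2 ≤ 2 * P t + 2 * ‖g t - gt t‖ ^ 2 := by
      have h1 : gradient f (x t) - g t = (gradient f (x t) - gt t) + (gt t - g t) := by abel
      have h2 := norm_add_le (gradient f (x t) - gt t) (gt t - g t)
      have h3 : ‖gt t - g t‖ = ‖g t - gt t‖ := norm_sub_rev _ _
      rw [h1, ← h3]
      nlinarith [pow_le_pow_left₀ (norm_nonneg (gradient f (x t) - gt t + (gt t - g t))) h2 2,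
        sq_nonneg (‖gradient f (x t) - gt t‖ - ‖gt t - g t‖), hgt_grad,
        norm_nonneg (gradient f (x t) - gt t), norm_nonneg (gt t - g t)]
    have hM := hMrec t
    have hPr := hPrec t
    have hM' : C * ‖g (t + 1) - gt (t + 1)‖ ^ 2 ≤ C * ((1 - AM) * ‖g t - gt t‖ ^ 2
        + 3 * BM * (2 - AW) * P t + 3 * BM * (BW + 1) * Lp ^ 2 * R t) :=
      mul_le_mul_of_nonneg_left hM hCnn
    have hPr' : D * P (t + 1) ≤ D * ((1 - AW) * P t + BW * Lp ^ 2 * R t) :=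
      mul_le_mul_of_nonneg_left hPr hDnn
    -- constant identities
    have hCAM : C * AM = γ := by
      rw [hCdef]; field_simp
    have hDAW : D * AW = γ + C * (3 * BM * (2 - AW)) := by
      rw [hDdef, hCdef]; field_simp
    have hcoef : C * (3 * BM * (BW + 1)) + D * BW = γ * S / 2 := by
      rw [hDdef, hCdef, hSdef]; field_simp; ring
    have hRt2 : ‖x (t + 1) - x t‖ ^ 2 = γ ^ 2 * ‖g t‖ ^ 2 := by rw [← hR t, hRt]
    rw [hRt] at hM' hPr'
    rw [hinner, hRt2] at hdesc
    have hsplit' : γ / 2 * ‖gradient f (x t) - g t‖ ^ 2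
        ≤ γ / 2 * (2 * P t + 2 * ‖g t - gt t‖ ^ 2) :=
      mul_le_mul_of_nonneg_left hsplit (half_pos hγ0).le
    have h5 : C * AM * ‖g t - gt t‖ ^ 2 = γ * ‖g t - gt t‖ ^ 2 := by rw [hCAM]
    have h6 : D * AW * P t = (γ + C * (3 * BM * (2 - AW))) * P t := by rw [hDAW]
    have h7 : (C * (3 * BM * (BW + 1)) + D * BW) * (Lp ^ 2 * (γ ^ 2 * ‖g t‖ ^ 2))
        = γ * S / 2 * (Lp ^ 2 * (γ ^ 2 * ‖g t‖ ^ 2)) := by rw [hcoef]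
    have h8 : γ / 2 * (Lm * γ + γ ^ 2 * Lp ^ 2 * S - 1) * ‖g t‖ ^ 2 ≤ 0 := by
      apply mul_nonpos_of_nonpos_of_nonneg _ (sq_nonneg _)
      apply mul_nonpos_of_nonneg_of_nonpos (half_pos hγ0).le
      linarith
    simp only [hΨdef]
    linarith [hdesc, hM', hPr', hsplit', h5, h6, h7, h8]
  -- telescoping
  have hsum : ∀ N : ℕ, γ / 2 * ∑ t ∈ Finset.range N, ‖gradient f (x t)‖ ^ 2 ≤ Ψ 0 - Ψ N := by
    intro N
    induction N with
    | zero => simp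
    | succ k ih =>
      rw [Finset.sum_range_succ, mul_add]
      have := hstep k
      linarith
  have h1 : γ / 2 * ∑ t ∈ Finset.range T, ‖gradient f (x t)‖ ^ 2 ≤ Ψ 0 :=
    le_trans (hsum T) (by linarith [hΨnn T])
  have h2 : ∑ t ∈ Finset.range T, ‖gradient f (x t)‖ ^ 2
      ≤ 2 * Ψ 0 * (Lm + Lp * Real.sqrt S) := by
    have h3 := mul_le_mul_of_nonneg_left h1
      (show (0:ℝ) ≤ 2 * (Lm + Lp * Real.sqrt S) by positivity)
    calc ∑ t ∈ Finset.range T, ‖gradient f (x t)‖ ^ 2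
        = 2 * (Lm + Lp * Real.sqrt S) * (γ / 2 * ∑ t ∈ Finset.range T, ‖gradient f (x t)‖ ^ 2) := by
          linear_combination (-(∑ t ∈ Finset.range T, ‖gradient f (x t)‖ ^ 2)) * hγE
      _ ≤ 2 * (Lm + Lp * Real.sqrt S) * Ψ 0 := h3
      _ = 2 * Ψ 0 * (Lm + Lp * Real.sqrt S) := by ring
  have hgoal : 2 * (f (x 0) - finf + C * ‖g 0 - gt 0‖ ^ 2 + D * P 0) * (Lm + Lp * Real.sqrt S)
      / (T : ℝ) = (1 / (T : ℝ)) * (2 * Ψ 0 * (Lm + Lp * Real.sqrt S)) := by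
    simp only [hΨdef]
    ring
  rw [hgoal]
  exact mul_le_mul_of_nonneg_left h2 (by positivity)
end

section
/- Let f : ℝ^d → ℝ be a differentiable convex function with minimizer x* ∈ ℝ^d, and let c ≥ 0. Then for every x ∈ ℝ^d, f(x) − f(x*) + c ≤ √((‖∇f(x)‖² + c)·(‖x − x*‖² + c)). -/
open RealInnerProductSpace

/-! The convexity inequality at `x` bounds the gap `f x - f x*` by `⟪∇f x, x - x*⟫`, and adding `c`
gives the inner product of `(∇f x, √c)` and `(x - x*, √c)`, which Cauchy–Schwarz bounds by the
product of their norms. -/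

theorem mul_add_le_sqrt_sq_add_mul_sq_add (a b : ℝ) {c : ℝ} (hc : 0 ≤ c) :
    a * b + c ≤ √((a ^ 2 + c) * (b ^ 2 + c)) :=
  (le_abs_self _).trans <| Real.abs_le_sqrt <| by
    nlinarith [mul_nonneg hc (sq_nonneg (a - b))]

theorem real_inner_add_le_sqrt_norm_sq_add_mul {E : Type*} [NormedAddCommGroup E]
    [InnerProductSpace ℝ E] (u v : E) {c : ℝ} (hc : 0 ≤ c) :
    ⟪u, v⟫ + c ≤ √((‖u‖ ^ 2 + c) * (‖v‖ ^ 2 + c)) :=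
  (add_le_add_left (real_inner_le_norm u v) c).trans (mul_add_le_sqrt_sq_add_mul_sq_add _ _ hc)

theorem lyapunov_product_upper_bound_general
    {d : ℕ} (f : EuclideanSpace ℝ (Fin d) → ℝ)
    (hconv : ∀ x y, 0 ≤ f x - f y - ⟪gradient f y, x - y⟫)
    (xstar : EuclideanSpace ℝ (Fin d))
    (c : ℝ) (hc : 0 ≤ c) :
    ∀ x, f x - f xstar + c ≤
      Real.sqrt ((‖gradient f x‖ ^ 2 + c) * (‖x - xstar‖ ^ 2 + c)) := by
  intro x
  have hgap : f x - f xstar ≤ ⟪gradient f x, x - xstar⟫ := by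
    have h := hconv xstar x
    rw [← neg_sub x xstar, inner_neg_right] at h
    linarith
  linarith [real_inner_add_le_sqrt_norm_sq_add_mul (gradient f x) (x - xstar) hc]

/-- **Lemma (Lyapunov product upper bound, deterministic core).**
For a differentiable convex `f : ℝ^d → ℝ` with minimizer `x*` and any `c ≥ 0`,
`f(x) - f(x*) + c ≤ √((‖∇f(x)‖² + c)(‖x - x*‖² + c))` for every `x`. -/
theorem lyapunov_product_upper_bound
    {d : ℕ} (f : EuclideanSpace ℝ (Fin d) → ℝ)
    (hdiff : Differentiable ℝ f)
    (hconv : ∀ x y, 0 ≤ f x - f y - ⟪gradient f y, x - y⟫)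
    (xstar : EuclideanSpace ℝ (Fin d)) (hmin : ∀ x, f xstar ≤ f x)
    (c : ℝ) (hc : 0 ≤ c) :
    ∀ x, f x - f xstar + c ≤
      Real.sqrt ((‖gradient f x‖ ^ 2 + c) * (‖x - xstar‖ ^ 2 + c)) :=
  lyapunov_product_upper_bound_general f hconv xstar c hc
end

section
/- Let f_1,…,f_n : ℝ^d → ℝ be differentiable and satisfy L₊-average-smoothness. Let A^W, A^M ∈ (0,1] and B^W, B^M ≥ 0. Let x, x⁺ ∈ ℝ^d, let g̃_i, g̃_i⁺ ∈ ℝ^d (i = 1,…,n) satisfy the worker 3PC bound ‖g̃_i⁺ − ∇f_i(x⁺)‖² ≤ (1 − A^W)‖g̃_i − ∇f_i(x)‖² + B^W‖∇f_i(x⁺) − ∇f_i(x)‖² for each i, set g̃ := (1/n)∑_i g̃_i and g̃⁺ := (1/n)∑_i g̃_i⁺, and let g, g⁺ ∈ ℝ^d satisfy the master 3PC bound ‖g⁺ − g̃⁺‖² ≤ (1 − A^M)‖g − g̃‖² + B^M‖g̃⁺ − g̃‖². Then ‖g⁺ − g̃⁺‖² ≤ (1 − A^M)‖g − g̃‖²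 + 3B^M(2 − A^W)·P + 3B^M(B^W + 1)·L₊²‖x⁺ − x‖², where P := (1/n)∑_{i=1}^n ‖g̃_i − ∇f_i(x)‖². -/
set_option maxHeartbeats 1000000 in


/-- **Lemma (one-step recursion for the master error).**
If each client's estimator satisfies the worker 3PC bound and the server's
estimator satisfies the master 3PC bound, then under `Lp`-average-smoothness
`‖g⁺ - g̃⁺‖² ≤ (1 - AM)‖g - g̃‖² + 3BM(2 - AW)·P + 3BM(BW + 1)·Lp²‖x⁺ - x‖²`,
where `P = (1/n)∑ ‖g̃ᵢ - ∇fᵢ(x)‖²`. -/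
theorem master_error_recursion
    {d n : ℕ} (hn : 1 ≤ n)
    (fi : Fin n → EuclideanSpace ℝ (Fin d) → ℝ)
    (hdiff : ∀ i, Differentiable ℝ (fi i))
    (Lp : ℝ)
    (hLp : ∀ x y, (1 / (n : ℝ)) * ∑ i, ‖gradient (fi i) x - gradient (fi i) y‖ ^ 2
      ≤ Lp ^ 2 * ‖x - y‖ ^ 2)
    (AW AM BW BM : ℝ)
    (hAW : AW ∈ Set.Ioc (0 : ℝ) 1) (hAM : AM ∈ Set.Ioc (0 : ℝ) 1)
    (hBW : 0 ≤ BW) (hBM : 0 ≤ BM)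
    (x xp : EuclideanSpace ℝ (Fin d))
    (gti gtip : Fin n → EuclideanSpace ℝ (Fin d))
    (hW3PC : ∀ i, ‖gtip i - gradient (fi i) xp‖ ^ 2 ≤
      (1 - AW) * ‖gti i - gradient (fi i) x‖ ^ 2
        + BW * ‖gradient (fi i) xp - gradient (fi i) x‖ ^ 2)
    (gt gtp : EuclideanSpace ℝ (Fin d))
    (hgt : gt = (1 / (n : ℝ)) • ∑ i, gti i)
    (hgtp : gtp = (1 / (n : ℝ)) • ∑ i, gtip i)
    (g gp : EuclideanSpace ℝ (Fin d))
    (hM3PC : ‖gp - gtp‖ ^ 2 ≤ (1 - AM) * ‖g - gt‖ ^ 2 + BM * ‖gtp - gt‖ ^ 2) :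
    ‖gp - gtp‖ ^ 2 ≤
      (1 - AM) * ‖g - gt‖ ^ 2
        + 3 * BM * (2 - AW) * ((1 / (n : ℝ)) * ∑ i, ‖gti i - gradient (fi i) x‖ ^ 2)
        + 3 * BM * (BW + 1) * (Lp ^ 2 * ‖xp - x‖ ^ 2) := by
  have hnpos : (0 : ℝ) < n := by exact_mod_cast hn
  set a : Fin n → EuclideanSpace ℝ (Fin d) := fun i => gtip i - gradient (fi i) xp with ha
  set b : Fin n → EuclideanSpace ℝ (Fin d) := fun i => gradient (fi i) xp - gradient (fi i) x with hb
  set c : Fin n → EuclideanSpace ℝ (Fin d) := fun i => gti i - gradient (fi i) x with hc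
  -- Step 1: mean-square bound on the aggregated difference
  have hdiff1 : gtp - gt = (1 / (n : ℝ)) • ∑ i, (a i + b i - c i) := by
    rw [hgt, hgtp, ← smul_sub, ← Finset.sum_sub_distrib]
    congr 1
    apply Finset.sum_congr rfl
    intro i _
    simp only [ha, hb, hc]
    abel
  have key : ‖gtp - gt‖ ^ 2 ≤ (1 / (n : ℝ)) * ∑ i, ‖a i + b i - c i‖ ^ 2 := by
    rw [hdiff1, norm_smul]
    have h1 : ‖∑ i, (a i + b i - c i)‖ ≤ ∑ i, ‖a i + b i - c i‖ := norm_sum_le _ _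
    have h2 : (∑ i, ‖a i + b i - c i‖) ^ 2 ≤ (n : ℝ) * ∑ i, ‖a i + b i - c i‖ ^ 2 := by
      have := sq_sum_le_card_mul_sum_sq (s := (Finset.univ : Finset (Fin n)))
        (f := fun i => ‖a i + b i - c i‖)
      simpa using this
    have h4 : ‖∑ i, (a i + b i - c i)‖ ^ 2 ≤ (n : ℝ) * ∑ i, ‖a i + b i - c i‖ ^ 2 := by
      calc ‖∑ i, (a i + b i - c i)‖ ^ 2 ≤ (∑ i, ‖a i + b i - c i‖) ^ 2 := by
            apply pow_le_pow_left₀ (norm_nonneg _) h1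
        _ ≤ _ := h2
    rw [mul_pow]
    have hnorm : ‖(1 : ℝ) / (n : ℝ)‖ ^ 2 = (1 / (n : ℝ)) ^ 2 := by
      rw [Real.norm_eq_abs, sq_abs]
    rw [hnorm]
    calc (1 / (n : ℝ)) ^ 2 * ‖∑ i, (a i + b i - c i)‖ ^ 2
        ≤ (1 / (n : ℝ)) ^ 2 * ((n : ℝ) * ∑ i, ‖a i + b i - c i‖ ^ 2) := by
          apply mul_le_mul_of_nonneg_left h4 (by positivity)
      _ = (1 / (n : ℝ)) * ∑ i, ‖a i + b i - c i‖ ^ 2 := by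
          field_simp
  -- Step 2: pointwise bound
  have hpt : ∀ i, ‖a i + b i - c i‖ ^ 2 ≤
      3 * (2 - AW) * ‖c i‖ ^ 2 + 3 * (BW + 1) * ‖b i‖ ^ 2 := by
    intro i
    have htri : ‖a i + b i - c i‖ ≤ ‖a i‖ + ‖b i‖ + ‖c i‖ := by
      calc ‖a i + b i - c i‖ ≤ ‖a i + b i‖ + ‖c i‖ := norm_sub_le _ _
        _ ≤ ‖a i‖ + ‖b i‖ + ‖c i‖ := by
            have := norm_add_le (a i) (b i); linarith
    have hsq : ‖a i + b i - c i‖ ^ 2 ≤ 3 * (‖a i‖ ^ 2 + ‖b i‖ ^ 2 + ‖c i‖ ^ 2) := by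
      nlinarith [norm_nonneg (a i), norm_nonneg (b i), norm_nonneg (c i),
        norm_nonneg (a i + b i - c i), sq_nonneg (‖a i‖ - ‖b i‖),
        sq_nonneg (‖a i‖ - ‖c i‖), sq_nonneg (‖b i‖ - ‖c i‖)]
    have hw := hW3PC i
    have hA : ‖a i‖ ^ 2 ≤ (1 - AW) * ‖c i‖ ^ 2 + BW * ‖b i‖ ^ 2 := by
      simpa only [ha, hb, hc] using hw
    nlinarith
  -- Step 3: sum the pointwise bound
  have hsum : (1 / (n : ℝ)) * ∑ i, ‖a i + b i - c i‖ ^ 2 ≤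
      3 * (2 - AW) * ((1 / (n : ℝ)) * ∑ i, ‖c i‖ ^ 2)
        + 3 * (BW + 1) * ((1 / (n : ℝ)) * ∑ i, ‖b i‖ ^ 2) := by
    have h := Finset.sum_le_sum (fun i (_ : i ∈ Finset.univ) => hpt i)
    rw [Finset.sum_add_distrib, ← Finset.mul_sum, ← Finset.mul_sum] at h
    have h2 : (1 / (n : ℝ)) * ∑ i, ‖a i + b i - c i‖ ^ 2 ≤
        (1 / (n : ℝ)) * (3 * (2 - AW) * ∑ i, ‖c i‖ ^ 2 + 3 * (BW + 1) * ∑ i, ‖b i‖ ^ 2) :=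
      mul_le_mul_of_nonneg_left h (by positivity)
    calc (1 / (n : ℝ)) * ∑ i, ‖a i + b i - c i‖ ^ 2 ≤ _ := h2
      _ = _ := by ring
  have hLpb : (1 / (n : ℝ)) * ∑ i, ‖b i‖ ^ 2 ≤ Lp ^ 2 * ‖xp - x‖ ^ 2 := hLp xp x
  have hmul : 3 * (BW + 1) * ((1 / (n : ℝ)) * ∑ i, ‖b i‖ ^ 2)
      ≤ 3 * (BW + 1) * (Lp ^ 2 * ‖xp - x‖ ^ 2) :=
    mul_le_mul_of_nonneg_left hLpb (by linarith)
  have hfinal : ‖gtp - gt‖ ^ 2 ≤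
      3 * (2 - AW) * ((1 / (n : ℝ)) * ∑ i, ‖c i‖ ^ 2)
        + 3 * (BW + 1) * (Lp ^ 2 * ‖xp - x‖ ^ 2) := by
    linarith [key, hsum]
  have hBMmul := mul_le_mul_of_nonneg_left hfinal hBM
  have hring : BM * (3 * (2 - AW) * ((1 / (n : ℝ)) * ∑ i, ‖c i‖ ^ 2)
      + 3 * (BW + 1) * (Lp ^ 2 * ‖xp - x‖ ^ 2))
      = 3 * BM * (2 - AW) * ((1 / (n : ℝ)) * ∑ i, ‖c i‖ ^ 2)
      + 3 * BM * (BW + 1) * (Lp ^ 2 * ‖xp - x‖ ^ 2) := by ring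
  linarith [hM3PC, hBMmul, hring]
end
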